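/- arXiv:1704.06024 — 3 statements merged into one kernel-verified Lean document; each statement's English description precedes it below -/
import Mathlib

section
/- Every ovoid of the symplectic generalized quadrangle W(q) is an ovoid of PG(3,q): no three of its points are collinear in PG(3,q). -/
open scoped Classical
open Module

noncomputable section

variable (F : Type) [Field F] [Fintype F]

abbrev V4 := Fin 4 → F

def IsPt (p : Submodule F (V4 F)) : Prop := finrank F p = 1

def IsLn (L : Submodule F (V4 F)) : Prop := finrank F L = 2

def ptsOn (L : Submodule F (V4 F)) : Set (Submodule F (V4 F)) :=
  {p | IsPt F p ∧ p ≤ L}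

def Coll3 (p r s : Submodule F (V4 F)) : Prop :=
  ∃ L, IsLn F L ∧ p ≤ L ∧ r ≤ L ∧ s ≤ L

def IsOvoid (q : ℕ) (O : Set (Submodule F (V4 F))) : Prop :=
  (∀ p ∈ O, IsPt F p) ∧ O.ncard = q ^ 2 + 1 ∧
    ∀ p ∈ O, ∀ r ∈ O, ∀ s ∈ O, p ≠ r → p ≠ s → r ≠ s → ¬ Coll3 F p r s

def TotIso (B : LinearMap.BilinForm F (V4 F)) (L : Submodule F (V4 F)) : Prop :=
  IsLn F L ∧ ∀ x ∈ L, ∀ y ∈ L, B x y = 0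

def Pt := {p : Submodule F (V4 F) // IsPt F p}

def chi (s : Set (Submodule F (V4 F))) : Pt F → ZMod 2 :=
  fun p => if p.1 ∈ s then 1 else 0

def commonTangents (q : ℕ) (θ : Fin (q + 1) → Set (Submodule F (V4 F))) :
    Set (Submodule F (V4 F)) :=
  {L | IsLn F L ∧ ∀ i, (θ i ∩ ptsOn F L).ncard = 1}

def gridSet (B : LinearMap.BilinForm F (V4 F)) (m : Submodule F (V4 F)) :
    Set (Submodule F (V4 F)) :=
  ptsOn F m ∪ ptsOn F (LinearMap.BilinForm.orthogonal B m)

def lineCode (B : LinearMap.BilinForm F (V4 F)) :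
    Submodule (ZMod 2) (Pt F → ZMod 2) :=
  Submodule.span (ZMod 2) {w | ∃ L, TotIso F B L ∧ w = chi F (ptsOn F L)}

def gridCode (B : LinearMap.BilinForm F (V4 F)) :
    Submodule (ZMod 2) (Pt F → ZMod 2) :=
  Submodule.span (ZMod 2)
    {w | ∃ m, IsLn F m ∧ ¬ (∀ x ∈ m, ∀ y ∈ m, B x y = 0) ∧ w = chi F (gridSet F B m)}

/-!
Suppose three points of `O` lay on a line `L` of `PG(3,q)`, and count `O` through the points of
`L`. Every `y ∈ O` is orthogonal to some point `x` of `L`, since `y^⊥` is a plane. A point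
`x ∈ O` is orthogonal to no other point of `O`, and a point `x ∉ O` to at most `q + 1` points of
`O`, one on each of the totally isotropic lines through `x`, which are the lines through `x` in
the plane `x^⊥`. Hence `q² + 1 = |O| ≤ 3 + (q - 2)(q + 1) = q² - q + 1`, which is absurd.
-/

instance Submodule.finite_of_finite {R M : Type*} [Semiring R] [AddCommMonoid M] [Module R M]
    [Finite M] : Finite (Submodule R M) :=
  Finite.of_injective _ SetLike.coe_injective

theorem Set.ncard_mul_le_of_pairwise_inter_eq {ι α : Type*} {T : Set ι} {s : ι → Set α}
    {U W : Set α} (hW : W.Finite) (hUW : U ⊆ W) (hU : ∀ i ∈ T, U ⊆ s i)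
    (hsW : ∀ i ∈ T, s i ⊆ W) (hT : T.Pairwise fun i j => s i ∩ s j = U) {c : ℕ}
    (hc : ∀ i ∈ T, (s i).ncard = c) :
    T.ncard * (c - U.ncard) ≤ W.ncard - U.ncard := by
  rcases T.finite_or_infinite with hTfin | hTinf
  swap
  · simp [hTinf.ncard]
  have hdisj : T.PairwiseDisjoint fun i => s i \ U := by
    intro i hi j hj hij
    rw [Function.onFun, Set.disjoint_iff]
    rintro x ⟨⟨hxi, hxU⟩, hxj, -⟩
    exact hxU (hT hi hj hij ▸ ⟨hxi, hxj⟩)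
  calc T.ncard * (c - U.ncard) = ∑ᶠ i ∈ T, (s i \ U).ncard := by
        rw [finsum_mem_congr rfl fun i hi => by
          rw [Set.ncard_sdiff (hU i hi) (hW.subset hUW), hc i hi, ← one_mul (c - _)],
          ← finsum_mem_mul' _ _ hTfin, finsum_one]
    _ = (⋃ i ∈ T, s i \ U).ncard :=
        (hTfin.ncard_biUnion (fun i hi => (hW.subset (hsW i hi)).sdiff) hdisj).symm
    _ ≤ (W \ U).ncard :=
        Set.ncard_le_ncard (Set.iUnion₂_subset fun i hi => Set.sdiff_subset_sdiff_left (hsW i hi))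
          hW.sdiff
    _ = W.ncard - U.ncard := Set.ncard_sdiff hUW (hW.subset hUW)

theorem Finset.sum_add_card_mul_le {ι : Type*} {t S : Finset ι} (hSt : S ⊆ t) {f : ι → ℕ}
    {b : ℕ} (hf : ∀ i ∈ t, f i ≤ b + 1) (hS : ∀ i ∈ S, f i = 1) :
    ∑ i ∈ t, f i + S.card * b ≤ t.card * (b + 1) := by
  have hsumS : ∑ i ∈ S, f i = S.card := by simp [Finset.sum_congr rfl hS]
  have hrest : ∑ i ∈ t \ S, f i ≤ (t \ S).card * (b + 1) :=
    Finset.sum_le_card_nsmul _ _ _ fun i hi => hf i (Finset.mem_sdiff.mp hi).1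
  rw [← Finset.sum_sdiff hSt, hsumS]
  rw [Finset.card_sdiff_of_subset hSt] at hrest
  obtain ⟨d, hd⟩ := Nat.exists_eq_add_of_le (Finset.card_le_card hSt)
  rw [hd, Nat.add_sub_cancel_left] at hrest
  rw [hd]
  nlinarith

section Incidence

variable {K V : Type*} [Field K] [AddCommGroup V] [Module K V]

theorem Submodule.inf_eq_of_finrank_eq_succ [FiniteDimensional K V] {x M N : Submodule K V}
    (hM : finrank K M = finrank K x + 1) (hN : finrank K N = finrank K x + 1) (hMN : M ≠ N)
    (hxM : x ≤ M) (hxN : x ≤ N) : M ⊓ N = x := by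
  have hlt : M ⊓ N < M := inf_le_left.lt_of_ne fun h =>
    hMN (Submodule.eq_of_le_of_finrank_eq (inf_eq_left.mp h) (hM.trans hN.symm))
  have := Submodule.finrank_lt_finrank_of_lt hlt
  exact (Submodule.eq_of_le_of_finrank_le (le_inf hxM hxN) (by omega)).symm

theorem Submodule.finrank_sup_eq_two [FiniteDimensional K V] {p y : Submodule K V}
    (hp : finrank K p = 1) (hy : finrank K y = 1) (hpy : p ≠ y) : finrank K ↥(p ⊔ y) = 2 := by
  have hinf : p ⊓ y = ⊥ :=
    inf_eq_of_finrank_eq_succ (by simpa using hp) (by simpa using hy) hpy bot_le bot_le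
  have := Submodule.finrank_sup_add_finrank_inf_eq p y
  rw [hinf, finrank_bot, hp, hy] at this
  omega

theorem Submodule.exists_finrank_eq_one_le_inf [FiniteDimensional K V] {A C : Submodule K V}
    (h : finrank K V < finrank K A + finrank K C) :
    ∃ p : Submodule K V, finrank K p = 1 ∧ p ≤ A ⊓ C := by
  have hne : A ⊓ C ≠ ⊥ := by
    intro hbot
    have := Submodule.finrank_sup_add_finrank_inf_eq A C
    rw [hbot, finrank_bot] at this
    have := Submodule.finrank_le (A ⊔ C)
    omega
  obtain ⟨v, hv, hv0⟩ := Submodule.exists_mem_ne_zero_of_ne_bot hne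
  exact ⟨K ∙ v, finrank_span_singleton hv0, (Submodule.span_singleton_le_iff_mem v _).mpr hv⟩

theorem Submodule.ncard_setOf_finrank_succ_le [Finite K] [FiniteDimensional K V]
    {x W : Submodule K V} (hxW : x ≤ W) (hW : finrank K W = finrank K x + 2) :
    {M : Submodule K V | finrank K M = finrank K x + 1 ∧ x ≤ M ∧ M ≤ W}.ncard
      ≤ Nat.card K + 1 := by
  have := Module.finite_of_finite K (M := V)
  have hcard (M : Submodule K V) : (M : Set V).ncard = Nat.card K ^ finrank K M :=
    (Nat.card_coe_set_eq (M : Set V)).symm.trans Module.natCard_eq_pow_finrank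
  -- the sets `M \ x` are disjoint, of size `q ^ (k + 1) - q ^ k`, inside `W \ x`
  have key := Set.ncard_mul_le_of_pairwise_inter_eq
    (T := {M : Submodule K V | finrank K M = finrank K x + 1 ∧ x ≤ M ∧ M ≤ W})
    (s := fun M : Submodule K V => (M : Set V))
    (Set.toFinite _) hxW (fun M hM => hM.2.1) (fun M hM => hM.2.2)
    (fun M hM N hN hMN => by
      simpa using congrArg ((↑) : Submodule K V → Set V)
        (inf_eq_of_finrank_eq_succ hM.1 hN.1 hMN hM.2.1 hN.2.1))
    (c := Nat.card K ^ (finrank K x + 1)) (fun M hM => by rw [hcard, hM.1])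
  rw [hcard, hcard, hW] at key
  set q := Nat.card K
  set k := finrank K x
  have hq : 1 < q := Finite.one_lt_card
  have hlt : q ^ k < q ^ (k + 1) := pow_lt_pow_right₀ hq (Nat.lt_succ_self k)
  have hle : q ^ k ≤ q ^ (k + 2) := Nat.pow_le_pow_right (by omega) (by omega)
  have hsplit : q ^ (k + 2) - q ^ k = (q + 1) * (q ^ (k + 1) - q ^ k) := by
    zify [hlt.le, hle]
    ring
  exact Nat.le_of_mul_le_mul_right (key.trans hsplit.le) (Nat.sub_pos_of_lt hlt)

theorem Submodule.ncard_setOf_finrank_one_le [Finite K] [FiniteDimensional K V]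
    {L : Submodule K V} (hL : finrank K L = 2) :
    {p : Submodule K V | finrank K p = 1 ∧ p ≤ L}.ncard ≤ Nat.card K + 1 := by
  simpa using ncard_setOf_finrank_succ_le (bot_le : ⊥ ≤ L) (by simpa using hL)

end Incidence

namespace LinearMap.BilinForm

variable {K V : Type*} [Field K] [AddCommGroup V] [Module K V] {B : LinearMap.BilinForm K V}

theorem IsAlt.le_orthogonal_of_finrank_eq_one (hB : B.IsAlt) {p : Submodule K V}
    (hp : finrank K p = 1) : p ≤ B.orthogonal p := by
  obtain ⟨v, -, hv⟩ := finrank_eq_one_iff'.mp hp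
  intro a ha b hb
  obtain ⟨c, hc⟩ := hv ⟨a, ha⟩
  obtain ⟨d, hd⟩ := hv ⟨b, hb⟩
  rw [show a = c • (v : V) from congrArg Subtype.val hc.symm,
    show b = d • (v : V) from congrArg Subtype.val hd.symm]
  simp [hB.self_eq_zero]

theorem sup_le_orthogonal_sup (hB : B.IsRefl) {p y : Submodule K V} (hp : p ≤ B.orthogonal p)
    (hy : y ≤ B.orthogonal y) (hyp : y ≤ B.orthogonal p) :
    p ⊔ y ≤ B.orthogonal (p ⊔ y) := by
  have hinf : B.orthogonal p ⊓ B.orthogonal y ≤ B.orthogonal (p ⊔ y) := by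
    rintro a ⟨hap, hay⟩ n hn
    obtain ⟨b, hb, c, hc, rfl⟩ := Submodule.mem_sup.mp hn
    simp [hap b hb, hay c hc]
  have hpy : p ≤ B.orthogonal y := fun a ha b hb => hB _ _ (hyp hb a ha)
  exact (sup_le (le_inf hp hpy) (le_inf hyp hy)).trans hinf

theorem exists_le_orthogonal_of_finrank_eq_two [FiniteDimensional K V] (hB : B.IsRefl)
    (hnd : B.Nondegenerate) {L y : Submodule K V} (hL : finrank K L = 2)
    (hy : finrank K y = 1) :
    ∃ x : Submodule K V, finrank K x = 1 ∧ x ≤ L ∧ y ≤ B.orthogonal x := by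
  have hyV := Submodule.finrank_le y
  obtain ⟨x, hx, hxLy⟩ := Submodule.exists_finrank_eq_one_le_inf (A := L) (C := B.orthogonal y)
    (by rw [finrank_orthogonal hnd, hL, hy]; omega)
  exact ⟨x, hx, hxLy.trans inf_le_left,
    fun a ha b hb => hB _ _ ((hxLy.trans inf_le_right) hb a ha)⟩

theorem ncard_le_sum_ncard_setOf_le_orthogonal [FiniteDimensional K V] (hB : B.IsRefl)
    (hnd : B.Nondegenerate) {O : Set (Submodule K V)} (hO : ∀ y ∈ O, finrank K y = 1)
    {L : Submodule K V} (hL : finrank K L = 2) (P : Finset (Submodule K V))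
    (hP : ∀ x : Submodule K V, finrank K x = 1 → x ≤ L → x ∈ P) :
    O.ncard ≤ ∑ x ∈ P, {y ∈ O | y ≤ B.orthogonal x}.ncard := by
  rcases O.finite_or_infinite with hOfin | hOinf
  swap
  · rw [hOinf.ncard]
    exact Nat.zero_le _
  have hcover : O ⊆ ⋃ x ∈ P, {y ∈ O | y ≤ B.orthogonal x} := by
    intro y hy
    obtain ⟨x, hx, hxL, hyx⟩ := exists_le_orthogonal_of_finrank_eq_two hB hnd hL (hO y hy)
    exact Set.mem_biUnion (Finset.mem_coe.mpr (hP x hx hxL)) ⟨hy, hyx⟩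
  have hfin : (⋃ x ∈ P, {y ∈ O | y ≤ B.orthogonal x}).Finite :=
    hOfin.subset (Set.iUnion₂_subset fun _ _ => Set.sep_subset _ _)
  exact (Set.ncard_le_ncard hcover hfin).trans (P.set_ncard_biUnion_le _)

end LinearMap.BilinForm

section Ovoid

open LinearMap.BilinForm

theorem totIso_sup {F : Type} [Field F] {B : LinearMap.BilinForm F (V4 F)} (hB : B.IsAlt)
    {x y : Submodule F (V4 F)} (hx : IsPt F x) (hy : IsPt F y)
    (hxy : x ≠ y) (hyx : y ≤ B.orthogonal x) : TotIso F B (x ⊔ y) :=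
  ⟨Submodule.finrank_sup_eq_two hx hy hxy, fun _ ha _ hb =>
    sup_le_orthogonal_sup hB.isRefl (hB.le_orthogonal_of_finrank_eq_one hx)
      (hB.le_orthogonal_of_finrank_eq_one hy) hyx hb _ ha⟩

theorem setOf_mem_le_orthogonal_eq_singleton {F : Type} [Field F]
    {B : LinearMap.BilinForm F (V4 F)} (hB : B.IsAlt) {O : Set (Submodule F (V4 F))}
    (hOpt : ∀ p ∈ O, IsPt F p)
    (hOnc : ∀ p ∈ O, ∀ r ∈ O, p ≠ r → ¬ ∃ L, TotIso F B L ∧ p ≤ L ∧ r ≤ L)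
    {x : Submodule F (V4 F)} (hx : x ∈ O) : {y ∈ O | y ≤ B.orthogonal x} = {x} := by
  ext y
  constructor
  · rintro ⟨hy, hyx⟩
    by_contra hne
    have hxy : x ≠ y := Ne.symm hne
    exact hOnc x hx y hy hxy
      ⟨x ⊔ y, totIso_sup hB (hOpt x hx) (hOpt y hy) hxy hyx, le_sup_left, le_sup_right⟩
  · rintro rfl
    exact ⟨hx, hB.le_orthogonal_of_finrank_eq_one (hOpt y hx)⟩

variable {F} {B : LinearMap.BilinForm F (V4 F)} {O : Set (Submodule F (V4 F))}

theorem ncard_setOf_mem_le_orthogonal_le (hB : B.IsAlt) (hnd : B.Nondegenerate)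
    (hOpt : ∀ p ∈ O, IsPt F p)
    (hOnc : ∀ p ∈ O, ∀ r ∈ O, p ≠ r → ¬ ∃ L, TotIso F B L ∧ p ≤ L ∧ r ≤ L)
    {x : Submodule F (V4 F)} (hx : IsPt F x) :
    {y ∈ O | y ≤ B.orthogonal x}.ncard ≤ Fintype.card F + 1 := by
  by_cases hxO : x ∈ O
  · rw [setOf_mem_le_orthogonal_eq_singleton hB hOpt hOnc hxO, Set.ncard_singleton]
    omega
  have hne {y} (hy : y ∈ O) : x ≠ y := fun h => hxO (h ▸ hy)
  have hinj : Set.InjOn (x ⊔ ·) {y ∈ O | y ≤ B.orthogonal x} := by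
    rintro y ⟨hy, hyx⟩ y' ⟨hy', -⟩ hyy'
    by_contra hne'
    refine hOnc y hy y' hy' hne' ⟨x ⊔ y, totIso_sup hB hx (hOpt y hy) (hne hy) hyx,
      le_sup_right, ?_⟩
    rw [show x ⊔ y = x ⊔ y' from hyy']
    exact le_sup_right
  have hxx : x ≤ B.orthogonal x := hB.le_orthogonal_of_finrank_eq_one hx
  calc {y ∈ O | y ≤ B.orthogonal x}.ncard
      = ((x ⊔ ·) '' {y ∈ O | y ≤ B.orthogonal x}).ncard := hinj.ncard_image.symm
    _ ≤ {M : Submodule F (V4 F) |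
          finrank F M = finrank F x + 1 ∧ x ≤ M ∧ M ≤ B.orthogonal x}.ncard := by
        refine Set.ncard_le_ncard ?_ (Set.toFinite _)
        rintro _ ⟨y, ⟨hy, hyx⟩, rfl⟩
        exact ⟨by rw [Submodule.finrank_sup_eq_two hx (hOpt y hy) (hne hy), hx], le_sup_left,
          sup_le hxx hyx⟩
    _ ≤ Nat.card F + 1 := Submodule.ncard_setOf_finrank_succ_le hxx
        (by rw [finrank_orthogonal hnd, Module.finrank_fin_fun, hx])
    _ = Fintype.card F + 1 := by rw [Nat.card_eq_fintype_card]

end Ovoid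

theorem stmt4 (q : ℕ) (hq : Fintype.card F = q)
    (B : LinearMap.BilinForm F (V4 F))
    (halt : ∀ v, B v v = 0) (hnd : B.Nondegenerate)
    (O : Set (Submodule F (V4 F)))
    (hOpt : ∀ p ∈ O, IsPt F p) (hOcard : O.ncard = q ^ 2 + 1)
    (hOnc : ∀ p ∈ O, ∀ r ∈ O, p ≠ r →
      ¬ ∃ L, TotIso F B L ∧ p ≤ L ∧ r ≤ L) :
    IsOvoid F q O := by
  refine ⟨hOpt, hOcard, ?_⟩
  rintro p hp r hr s hs hpr hps hrs ⟨L, hL, hpL, hrL, hsL⟩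
  set P := (Set.toFinite (ptsOn F L)).toFinset
  have hP (x : Submodule F (V4 F)) : x ∈ P ↔ IsPt F x ∧ x ≤ L := by
    rw [Set.Finite.mem_toFinset]
    rfl
  set S : Finset (Submodule F (V4 F)) := {p, r, s}
  have hS : ∀ x ∈ S, x ∈ O ∧ x ≤ L := by
    simp only [S, Finset.mem_insert, Finset.mem_singleton]
    rintro x (rfl | rfl | rfl) <;> constructor <;> assumption
  have hcover : O.ncard ≤ ∑ x ∈ P, {y ∈ O | y ≤ B.orthogonal x}.ncard :=
    LinearMap.BilinForm.ncard_le_sum_ncard_setOf_le_orthogonal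
      (LinearMap.BilinForm.IsAlt.isRefl halt) hnd hOpt hL P fun x hx hxL => (hP x).mpr ⟨hx, hxL⟩
  have hcount := Finset.sum_add_card_mul_le (b := q)
    (fun x hx => (hP x).mpr ⟨hOpt x (hS x hx).1, (hS x hx).2⟩)
    (fun x hx => hq ▸ ncard_setOf_mem_le_orthogonal_le halt hnd hOpt hOnc ((hP x).mp hx).1)
    (fun x hx => by rw [setOf_mem_le_orthogonal_eq_singleton halt hOpt hOnc (hS x hx).1,
      Set.ncard_singleton])
  have hPcard : P.card ≤ q + 1 := by
    rw [← Set.ncard_eq_toFinset_card _, ← hq, ← Nat.card_eq_fintype_card]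
    exact Submodule.ncard_setOf_finrank_one_le hL
  have hScard : S.card = 3 := Finset.card_eq_three.mpr ⟨p, r, s, hpr, hps, hrs, rfl⟩
  have hq2 : 2 ≤ q := hq ▸ Fintype.one_lt_card
  -- `q² + 1 + 3q ≤ |P| (q + 1) ≤ (q + 1)²`
  nlinarith
end
end

section
/- Let q be even, let O be an ovoid of PG(3,q), and let ⊥ be the symplectic polarity of PG(3,q) whose absolute lines are exactly the tangent lines of O. If m is a line of PG(3,q) that is not tangent to O, then exactly one of the lines m, m^⊥ is secant to O (meets it in 2 points) and the other is external to O (disjoint from it). -/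
open scoped Classical
open Module

noncomputable section

variable (F : Type) [Field F] [Fintype F]

/-! Double count the pairs `(p, r)` with `p` a point of `m^⊥`, `r ∈ O` and `r ∈ p^⊥`.
The polar plane `p^⊥` meets `O` in `1` point if `p ∈ O` and in `q + 1` points otherwise: every
line through `p` in `p^⊥` is absolute, hence tangent, so projecting `O ∩ p^⊥` from `p` onto a line
of `p^⊥` missing `p` is a bijection. A point `r ∈ O` is conjugate to all `q + 1` points of `m^⊥` if `r ∈ m`,
and to exactly one of them otherwise, since then `m^⊥ ∩ r^⊥ = (m ⊔ r)^⊥` is a point. With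
`a = |O ∩ m|` and `b = |O ∩ m^⊥|` this gives
`b + (q + 1 - b)(q + 1) = a (q + 1) + (q^2 + 1 - a)`, i.e. `a + b = 2`, while `a ≠ 1`. -/

namespace LinearMap.BilinForm

variable {K V : Type*} [Field K] [AddCommGroup V] [Module K V] {B : LinearMap.BilinForm K V}

theorem le_orthogonal_comm (hB : B.IsRefl) {N M : Submodule K V} :
    N ≤ B.orthogonal M ↔ M ≤ B.orthogonal N :=
  ⟨fun h x hx _ hy => hB _ _ (h hy x hx), fun h x hx _ hy => hB _ _ (h hy x hx)⟩

theorem orthogonal_sup (N M : Submodule K V) :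
    B.orthogonal (N ⊔ M) = B.orthogonal N ⊓ B.orthogonal M := by
  refine le_antisymm (le_inf (orthogonal_le le_sup_left) (orthogonal_le le_sup_right)) ?_
  rintro x ⟨hxN, hxM⟩ z hz
  obtain ⟨n, hn, m, hm, rfl⟩ := Submodule.mem_sup.mp hz
  show B (n + m) x = 0
  rw [map_add, LinearMap.add_apply, hxN n hn, hxM m hm, add_zero]

theorem sup_le_orthogonal_sup_s5 (hB : B.IsRefl) {N M : Submodule K V}
    (hN : N ≤ B.orthogonal N) (hM : M ≤ B.orthogonal M) (hNM : M ≤ B.orthogonal N) :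
    N ⊔ M ≤ B.orthogonal (N ⊔ M) := by
  rw [orthogonal_sup]
  exact sup_le (le_inf hN ((le_orthogonal_comm hB).mp hNM)) (le_inf hNM hM)

theorem le_orthogonal_self_of_finrank_eq_one (hB : B.IsAlt) {W : Submodule K V}
    (hW : finrank K W = 1) : W ≤ B.orthogonal W := by
  rw [← Projectivization.submodule_mk'' W hW, Projectivization.submodule_eq]
  intro x hx y hy
  obtain ⟨a, rfl⟩ := Submodule.mem_span_singleton.mp hx
  obtain ⟨b, rfl⟩ := Submodule.mem_span_singleton.mp hy
  simp [hB _]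

end LinearMap.BilinForm

theorem Submodule.finrank_sup_of_finrank_eq_one {K V : Type*} [Field K] [AddCommGroup V]
    [Module K V] [FiniteDimensional K V] {W r : Submodule K V} (hr : finrank K r = 1)
    (h : ¬ r ≤ W) : finrank K ↥(W ⊔ r) = finrank K W + 1 := by
  have hlt : W ⊓ r < r := inf_le_right.lt_of_ne fun e => h (inf_eq_right.mp e)
  have := Submodule.finrank_lt_finrank_of_lt hlt
  have := Submodule.finrank_sup_add_finrank_inf_eq W r
  omega

theorem Set.Finite.sum_ite_mem {α : Type*} {s : Set α} (hs : s.Finite) (X : Set α) (a b : ℕ) :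
    ∑ x ∈ hs.toFinset, (if x ∈ X then a else b) = (s ∩ X).ncard * a + (s \ X).ncard * b := by
  rw [Finset.sum_ite, Finset.sum_const, Finset.sum_const, smul_eq_mul, smul_eq_mul,
    Set.ncard_eq_toFinset_card _ (hs.inter_of_left X),
    Set.ncard_eq_toFinset_card _ hs.sdiff]
  congr 3 <;> ext <;> simp

theorem Set.Finite.sum_ncard_sep_comm {α β : Type*} {s : Set α} {t : Set β} (hs : s.Finite)
    (ht : t.Finite) (r : α → β → Prop) :
    ∑ a ∈ hs.toFinset, {b ∈ t | r a b}.ncard = ∑ b ∈ ht.toFinset, {a ∈ s | r a b}.ncard := by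
  classical
  convert Finset.sum_card_bipartiteAbove_eq_sum_card_bipartiteBelow r using 2 <;>
    rw [← Set.ncard_coe_finset] <;> congr 1 <;> ext <;> simp

open scoped LinearAlgebra.Projectivization

section Geometry

variable {F : Type} [Field F]

theorem finrank_V4 : finrank F (V4 F) = 4 := by simp

theorem IsPt.eq_of_le {p r : Submodule F (V4 F)} (hp : IsPt F p) (hr : IsPt F r) (h : p ≤ r) :
    p = r :=
  Submodule.eq_of_le_of_finrank_le h (by rw [hp, hr])

theorem isLn_sup {p r : Submodule F (V4 F)} (hp : IsPt F p) (hr : IsPt F r) (hne : p ≠ r) :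
    IsLn F (p ⊔ r) := by
  have := Submodule.finrank_sup_of_finrank_eq_one hr fun h => hne (hr.eq_of_le hp h).symm
  rw [IsLn, this, hp]

theorem IsLn.sup_eq {L p s : Submodule F (V4 F)} (hL : IsLn F L) (hp : IsPt F p) (hs : IsPt F s)
    (hne : p ≠ s) (hpL : p ≤ L) (hsL : s ≤ L) : p ⊔ s = L :=
  Submodule.eq_of_le_of_finrank_le (sup_le hpL hsL) (by rw [hL, isLn_sup hp hs hne])

theorem isPt_inf_of_finrank_sup {L l : Submodule F (V4 F)} (hL : IsLn F L) (hl : IsLn F l)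
    (h : finrank F ↥(L ⊔ l) = 3) : IsPt F (L ⊓ l) := by
  have := Submodule.finrank_sup_add_finrank_inf_eq L l
  rw [IsLn] at hL hl
  rw [IsPt]
  omega

theorem ptsOn_of_isPt {p : Submodule F (V4 F)} (hp : IsPt F p) : ptsOn F p = {p} :=
  Set.eq_singleton_iff_unique_mem.mpr ⟨⟨hp, le_rfl⟩, fun _ hr => hr.1.eq_of_le hp hr.2⟩

theorem ncard_ptsOn (W : Submodule F (V4 F)) : (ptsOn F W).ncard = Nat.card (ℙ F W) := by
  have hrange : ptsOn F W = Set.range fun x : ℙ F W => x.submodule.map W.subtype := by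
    ext p
    constructor
    · rintro ⟨hp, hpW⟩
      have hmap : (p.comap W.subtype).map W.subtype = p := by
        rw [Submodule.map_comap_subtype, inf_eq_right.mpr hpW]
      have hrank : finrank F (p.comap W.subtype) = 1 := by
        rw [← Submodule.finrank_map_subtype_eq, hmap, hp]
      exact ⟨Projectivization.mk'' _ hrank, by simp only [Projectivization.submodule_mk'', hmap]⟩
    · rintro ⟨x, rfl⟩
      exact ⟨by rw [IsPt, Submodule.finrank_map_subtype_eq, x.finrank_submodule],
        Submodule.map_subtype_le _ _⟩
  rw [hrange, Set.ncard_range_of_injective]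
  exact (Submodule.map_injective_of_injective W.injective_subtype).comp
    Projectivization.submodule_injective

theorem IsLn.ncard_ptsOn [Fintype F] {L : Submodule F (V4 F)} (hL : IsLn F L) :
    (ptsOn F L).ncard = Fintype.card F + 1 := by
  rw [_root_.ncard_ptsOn, Projectivization.card_of_finrank_two F L hL, Nat.card_eq_fintype_card]

theorem exists_isLn_not_le_sup_eq {p π : Submodule F (V4 F)} (hp : IsPt F p) (hpπ : p ≤ π)
    (hπ : finrank F π = 3) : ∃ l, IsLn F l ∧ ¬ p ≤ l ∧ p ⊔ l = π := by
  obtain ⟨c, hc⟩ := Submodule.exists_isCompl p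
  have hsup : p ⊔ c ⊓ π = π := by rw [← sup_inf_assoc_of_le c hpπ, hc.sup_eq_top, top_inf_eq]
  have hinf : p ⊓ (c ⊓ π) = ⊥ := eq_bot_iff.mpr fun x hx => hc.inf_eq_bot ▸ ⟨hx.1, hx.2.1⟩
  refine ⟨c ⊓ π, ?_, fun h => ?_, hsup⟩
  · have := Submodule.finrank_sup_add_finrank_inf_eq p (c ⊓ π)
    rw [hsup, hinf, finrank_bot, hπ, hp] at this
    rw [IsLn]
    omega
  · have hbot : p = ⊥ := le_bot_iff.mp (hinf ▸ le_inf le_rfl h)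
    rw [IsPt, hbot, finrank_bot] at hp
    exact zero_ne_one hp

variable {B : LinearMap.BilinForm F (V4 F)}

theorem finrank_orthogonal_add_finrank (hB : B.Nondegenerate) (W : Submodule F (V4 F)) :
    finrank F (B.orthogonal W) + finrank F W = 4 := by
  have := Submodule.finrank_le W
  rw [LinearMap.BilinForm.finrank_orthogonal hB, finrank_V4] at *
  omega

theorem IsLn.orthogonal (hB : B.Nondegenerate) {L : Submodule F (V4 F)} (hL : IsLn F L) :
    IsLn F (B.orthogonal L) := by
  have := finrank_orthogonal_add_finrank hB L
  rw [IsLn] at hL ⊢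
  omega

theorem isPt_sup_inf {p l r : Submodule F (V4 F)} (hp : IsPt F p) (hl : IsLn F l)
    (hpl : ¬ p ≤ l) (hr : IsPt F r) (hrp : r ≠ p) (hrpl : r ≤ p ⊔ l) : IsPt F ((p ⊔ r) ⊓ l) := by
  have hsup : p ⊔ r ⊔ l = p ⊔ l :=
    le_antisymm (sup_le (sup_le le_sup_left hrpl) le_sup_right) (sup_le_sup_right le_sup_left l)
  refine isPt_inf_of_finrank_sup (isLn_sup hp hr hrp.symm) hl ?_
  rw [hsup, sup_comm, Submodule.finrank_sup_of_finrank_eq_one hp hpl, hl]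

end Geometry

section Ovoid

open LinearMap.BilinForm

variable {F : Type} [Field F] {B : LinearMap.BilinForm F (V4 F)} {O : Set (Submodule F (V4 F))}

theorem exists_inter_ptsOn_sup_eq_singleton (hB : B.IsAlt)
    (htan : ∀ L, TotIso F B L → (O ∩ ptsOn F L).ncard = 1) {p s : Submodule F (V4 F)}
    (hp : IsPt F p) (hs : IsPt F s) (hne : p ≠ s) (hsp : s ≤ B.orthogonal p) :
    ∃ r, O ∩ ptsOn F (p ⊔ s) = {r} := by
  have hiso : p ⊔ s ≤ B.orthogonal (p ⊔ s) :=
    sup_le_orthogonal_sup_s5 hB.isRefl (le_orthogonal_self_of_finrank_eq_one hB hp)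
      (le_orthogonal_self_of_finrank_eq_one hB hs) hsp
  exact Set.ncard_eq_one.mp (htan _ ⟨isLn_sup hp hs hne, fun x hx y hy => hiso hy x hx⟩)

theorem inter_ptsOn_orthogonal_of_mem (hB : B.IsAlt)
    (htan : ∀ L, TotIso F B L → (O ∩ ptsOn F L).ncard = 1) {p : Submodule F (V4 F)}
    (hp : IsPt F p) (hpO : p ∈ O) : O ∩ ptsOn F (B.orthogonal p) = {p} := by
  refine Set.eq_singleton_iff_unique_mem.mpr
    ⟨⟨hpO, hp, le_orthogonal_self_of_finrank_eq_one hB hp⟩, ?_⟩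
  rintro r ⟨hrO, hr, hrp⟩
  by_contra hne
  obtain ⟨x, hx⟩ := exists_inter_ptsOn_sup_eq_singleton hB htan hp hr (Ne.symm hne) hrp
  have hpx : p ∈ O ∩ ptsOn F (p ⊔ r) := ⟨hpO, hp, le_sup_left⟩
  have hrx : r ∈ O ∩ ptsOn F (p ⊔ r) := ⟨hrO, hr, le_sup_right⟩
  rw [hx] at hpx hrx
  exact hne (hrx.trans hpx.symm)

theorem ncard_inter_ptsOn_orthogonal_of_notMem [Fintype F] (hB : B.IsAlt) (hnd : B.Nondegenerate)
    (htan : ∀ L, TotIso F B L → (O ∩ ptsOn F L).ncard = 1) {p : Submodule F (V4 F)}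
    (hp : IsPt F p) (hpO : p ∉ O) :
    (O ∩ ptsOn F (B.orthogonal p)).ncard = Fintype.card F + 1 := by
  have hpπ : p ≤ B.orthogonal p := le_orthogonal_self_of_finrank_eq_one hB hp
  have hπ : finrank F (B.orthogonal p) = 3 := by
    have := finrank_orthogonal_add_finrank hnd p
    rw [hp] at this
    omega
  obtain ⟨l, hl, hpl, hsup⟩ := exists_isLn_not_le_sup_eq hp hpπ hπ
  have hlπ : l ≤ B.orthogonal p := le_sup_right.trans hsup.le
  have hproj : ∀ r ∈ O ∩ ptsOn F (B.orthogonal p),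
      IsPt F ((p ⊔ r) ⊓ l) ∧ p ⊔ (p ⊔ r) ⊓ l = p ⊔ r := by
    rintro r ⟨hrO, hr, hrπ⟩
    have hrp : r ≠ p := ne_of_mem_of_not_mem hrO hpO
    have hs := isPt_sup_inf hp hl hpl hr hrp (hrπ.trans hsup.ge)
    exact ⟨hs, (isLn_sup hp hr hrp.symm).sup_eq hp hs (fun h => hpl (h.le.trans inf_le_right))
      le_sup_left inf_le_left⟩
  rw [← hl.ncard_ptsOn]
  refine Set.ncard_congr (fun r _ => (p ⊔ r) ⊓ l) (fun r hr => ⟨(hproj r hr).1, inf_le_right⟩)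
    ?inj ?surj
  · intro r₁ r₂ hr₁ hr₂ heq
    obtain ⟨hs, hps₁⟩ := hproj r₁ hr₁
    have hps₂ := (hproj r₂ hr₂).2
    rw [← heq] at hps₂
    obtain ⟨x, hx⟩ := exists_inter_ptsOn_sup_eq_singleton hB htan hp hs
      (fun h => hpl (h.le.trans inf_le_right)) (inf_le_right.trans hlπ)
    have hx₁ : r₁ ∈ O ∩ ptsOn F (p ⊔ (p ⊔ r₁) ⊓ l) := ⟨hr₁.1, hr₁.2.1, le_sup_right.trans hps₁.ge⟩
    have hx₂ : r₂ ∈ O ∩ ptsOn F (p ⊔ (p ⊔ r₁) ⊓ l) := ⟨hr₂.1, hr₂.2.1, le_sup_right.trans hps₂.ge⟩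
    rw [hx] at hx₁ hx₂
    exact hx₁.trans hx₂.symm
  · rintro s ⟨hs, hsl⟩
    have hsp : s ≠ p := fun h => hpl (h.ge.trans hsl)
    obtain ⟨r, hr⟩ := exists_inter_ptsOn_sup_eq_singleton hB htan hp hs hsp.symm (hsl.trans hlπ)
    obtain ⟨hrO, hrpt, hrps⟩ : r ∈ O ∩ ptsOn F (p ⊔ s) := by rw [hr]; exact rfl
    have hrp : r ≠ p := ne_of_mem_of_not_mem hrO hpO
    have hpr : p ⊔ r = p ⊔ s := (isLn_sup hp hs hsp.symm).sup_eq hp hrpt hrp.symm le_sup_left hrps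
    refine ⟨r, ⟨hrO, hrpt, hrps.trans (sup_le hpπ (hsl.trans hlπ))⟩, ?_⟩
    rw [hpr]
    exact (hs.eq_of_le (isPt_sup_inf hp hl hpl hs hsp (le_sup_of_le_right hsl))
      (le_inf le_sup_right hsl)).symm

theorem ncard_inter_ptsOn_orthogonal [Fintype F] (hB : B.IsAlt) (hnd : B.Nondegenerate)
    (htan : ∀ L, TotIso F B L → (O ∩ ptsOn F L).ncard = 1) {p : Submodule F (V4 F)}
    (hp : IsPt F p) :
    (O ∩ ptsOn F (B.orthogonal p)).ncard = if p ∈ O then 1 else Fintype.card F + 1 := by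
  split_ifs with hpO
  · rw [inter_ptsOn_orthogonal_of_mem hB htan hp hpO, Set.ncard_singleton]
  · exact ncard_inter_ptsOn_orthogonal_of_notMem hB hnd htan hp hpO

theorem ncard_sep_mem_ptsOn_orthogonal [Fintype F] (hnd : B.Nondegenerate) (hB : B.IsRefl)
    {m r : Submodule F (V4 F)} (hm : IsLn F m) (hr : IsPt F r) :
    {p ∈ ptsOn F (B.orthogonal m) | r ∈ ptsOn F (B.orthogonal p)}.ncard =
      if r ∈ ptsOn F m then Fintype.card F + 1 else 1 := by
  have hset : {p ∈ ptsOn F (B.orthogonal m) | r ∈ ptsOn F (B.orthogonal p)} =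
      ptsOn F (B.orthogonal (m ⊔ r)) := by
    ext p
    simp only [ptsOn, Set.mem_ofPred_eq, orthogonal_sup, le_inf_iff, le_orthogonal_comm hB (N := r)]
    tauto
  rw [hset]
  split_ifs with hrm
  · rw [sup_eq_left.mpr hrm.2, (hm.orthogonal hnd).ncard_ptsOn]
  · have hmr := Submodule.finrank_sup_of_finrank_eq_one hr fun h => hrm ⟨hr, h⟩
    have := finrank_orthogonal_add_finrank hnd (m ⊔ r)
    rw [IsLn] at hm
    rw [ptsOn_of_isPt (show IsPt F _ by rw [IsPt]; omega), Set.ncard_singleton]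

theorem ncard_inter_ptsOn_add_ncard_inter_ptsOn_orthogonal [Fintype F] (hB : B.IsAlt)
    (hnd : B.Nondegenerate) (hO : ∀ p ∈ O, IsPt F p) (hcard : O.ncard = Fintype.card F ^ 2 + 1)
    (htan : ∀ L, TotIso F B L → (O ∩ ptsOn F L).ncard = 1) {m : Submodule F (V4 F)}
    (hm : IsLn F m) : (O ∩ ptsOn F m).ncard + (O ∩ ptsOn F (B.orthogonal m)).ncard = 2 := by
  set P := ptsOn F (B.orthogonal m)
  have hP : P.Finite := Set.toFinite P
  have hOfin : O.Finite := Set.toFinite O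
  have hcount := hP.sum_ncard_sep_comm hOfin fun p r => r ∈ ptsOn F (B.orthogonal p)
  simp only [Set.sep_mem_eq] at hcount
  rw [Finset.sum_congr rfl fun p hp => ncard_inter_ptsOn_orthogonal hB hnd htan
      (hP.mem_toFinset.mp hp).1,
    Finset.sum_congr rfl fun r hr => ncard_sep_mem_ptsOn_orthogonal hnd hB.isRefl hm
      (hO r (hOfin.mem_toFinset.mp hr)),
    hP.sum_ite_mem, hOfin.sum_ite_mem, Set.inter_comm] at hcount
  have hPcard := Set.ncard_inter_add_ncard_sdiff_eq_ncard P O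
  have hOcard := Set.ncard_inter_add_ncard_sdiff_eq_ncard O (ptsOn F m)
  rw [Set.inter_comm, (hm.orthogonal hnd).ncard_ptsOn] at hPcard
  rw [hcard] at hOcard
  have hq : 0 < Fintype.card F := Fintype.card_pos
  refine Nat.eq_of_mul_eq_mul_right hq ?_
  linear_combination (Fintype.card F + 1) * hPcard - hcount - hOcard

end Ovoid

theorem stmt5 (q : ℕ) (hq : Fintype.card F = q)
    (O : Set (Submodule F (V4 F))) (hO : IsOvoid F q O)
    (B : LinearMap.BilinForm F (V4 F))
    (halt : ∀ v, B v v = 0) (hnd : B.Nondegenerate)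
    (htan : ∀ L, IsLn F L →
      ((O ∩ ptsOn F L).ncard = 1 ↔ ∀ x ∈ L, ∀ y ∈ L, B x y = 0))
    (m : Submodule F (V4 F)) (hm : IsLn F m)
    (hmt : (O ∩ ptsOn F m).ncard ≠ 1) :
    ((O ∩ ptsOn F m).ncard = 2 ∧
      (O ∩ ptsOn F (LinearMap.BilinForm.orthogonal B m)).ncard = 0) ∨
    ((O ∩ ptsOn F m).ncard = 0 ∧
      (O ∩ ptsOn F (LinearMap.BilinForm.orthogonal B m)).ncard = 2) := by
  subst hq
  have := ncard_inter_ptsOn_add_ncard_inter_ptsOn_orthogonal halt hnd hO.1 hO.2.1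
    (fun L hL => (htan L hL.1).mpr hL.2) hm
  omega
end
end

section
/- Let T be a cyclic group of collineations of PG(3,q) of order q^2+1 acting with q+1 orbits E_0,...,E_q on points, each orbit being an ovoid, and let S be the set of common tangent lines to all E_i. If ℓ is a line of PG(3,q) not in S, then the sum over t ∈ T of the characteristic vectors of the lines t(ℓ) in F_2^P equals the characteristic vector of the unique ovoid E_i to which ℓ is tangent. -/
open scoped Classical
open Module

noncomputable section

variable (F : Type) [Field F] [Fintype F]

/-!
Write `n_j(m)` for the number of points a line `m` shares with `E_j` (it is `0`, `1` or `2`) and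
`a(m)` for the number of `j` with `n_j(m) = 1`. As `∑_j n_j(m) = q + 1` is odd, `a(m) ≥ 1`.
Double counting pairs of points on lines gives `∑_m a(m) = #lines + q (q² + 1)`. For `j ≠ k`,
`∑_m n_j(m) n_k(m) = (q² + 1)²` is odd, so `E_j` and `E_k` have a common tangent. No nontrivial
element of `T` fixes a tangent of `E_j`, since it would fix the point of contact and `T` is regular
on `E_j`, so the `T`-orbit of that tangent consists of `q² + 1` common tangents. Hence
`∑_m a(m) (a(m) - 1) ≥ (q + 1) q (q² + 1)`, which forces `∑_m (a(m) - 1) (q + 1 - a(m)) = 0`: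
every line is tangent to exactly one or to all of the `E_j`. So `ℓ` is tangent to `E_i` only, and
by regularity of `T` on `E_c` the orbit sum takes the value `n_c(ℓ) mod 2` on `E_c`.
-/

open scoped Pointwise
open Finset

theorem Submodule.existsUnique_finrank_eq_two_le {K V : Type*} [DivisionRing K]
    [AddCommGroup V] [Module K V] [FiniteDimensional K V] {p r : Submodule K V}
    (hp : finrank K p = 1) (hr : finrank K r = 1) (hpr : p ≠ r) :
    ∃! L : Submodule K V, finrank K L = 2 ∧ p ≤ L ∧ r ≤ L := by
  have hinf : p ⊓ r = ⊥ := by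
    have hlt : p ⊓ r < p := inf_le_left.lt_of_ne fun h =>
      hpr (Submodule.eq_of_le_of_finrank_eq (h ▸ inf_le_right) (hp.trans hr.symm))
    have := Submodule.finrank_lt_finrank_of_lt hlt
    rwa [hp, Nat.lt_one_iff, Submodule.finrank_eq_zero] at this
  have hsup : finrank K ↥(p ⊔ r) = 2 := by
    have := Submodule.finrank_sup_add_finrank_inf_eq p r
    rwa [hinf, finrank_bot, hp, hr] at this
  refine ⟨p ⊔ r, ⟨hsup, le_sup_left, le_sup_right⟩, fun L ⟨hL, hpL, hrL⟩ => ?_⟩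
  exact (Submodule.eq_of_le_of_finrank_eq (sup_le hpL hrL) (hsup.trans hL.symm)).symm

theorem Submodule.finrank_smul {K V : Type*} [DivisionRing K] [AddCommGroup V] [Module K V]
    (e : V ≃ₗ[K] V) (W : Submodule K V) : finrank K ↥(e • W) = finrank K W :=
  e.finrank_map_eq W

theorem Submodule.le_smul_iff_inv_smul_le {K V : Type*} [DivisionRing K] [AddCommGroup V]
    [Module K V] {e : V ≃ₗ[K] V} {W W' : Submodule K V} : W ≤ e • W' ↔ e⁻¹ • W ≤ W' :=
  ⟨fun h => inv_smul_smul e W' ▸ smul_le_smul_left e⁻¹ h,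
    fun h => smul_inv_smul e W ▸ smul_le_smul_left e h⟩

theorem Finset.exists_odd_of_odd_sum {ι : Type*} {s : Finset ι} {f : ι → ℕ}
    (h : Odd (∑ i ∈ s, f i)) : ∃ i ∈ s, Odd (f i) := by
  obtain ⟨i, hi⟩ := card_pos.mp ((odd_sum_iff_odd_card_odd f).mp h).pos
  exact ⟨i, (mem_filter.mp hi).1, (mem_filter.mp hi).2⟩

theorem smul_left_injective_of_card_eq_ncard {G α : Type*} [SMul G α] [Finite G] {O : Set α}
    {a : α} (hmaps : ∀ g : G, g • a ∈ O) (hsurj : ∀ b ∈ O, ∃ g : G, g • a = b)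
    (hcard : Nat.card G = O.ncard) : Function.Injective fun g : G => g • a := by
  have hrange : Set.range (fun g : G => g • a) = O :=
    Set.Subset.antisymm (Set.range_subset_iff.mpr hmaps) hsurj
  refine Set.injOn_univ.mp (Set.injOn_of_ncard_image_eq ?_)
  rw [Set.image_univ, hrange, ← hcard, Set.ncard_univ]

theorem sum_card_filter_mul_pred_eq_sum_offDiag {ι β : Type*} [Fintype ι] [DecidableEq ι]
    (s : Finset β) (r : ι → β → Prop) [∀ j m, Decidable (r j m)] :
    ∑ m ∈ s, #{j | r j m} * (#{j | r j m} - 1) =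
      ∑ x ∈ (univ : Finset ι).offDiag, #{m ∈ s | r x.1 m ∧ r x.2 m} := by
  refine (sum_congr rfl fun m _ => ?_).trans
    (sum_card_bipartiteAbove_eq_sum_card_bipartiteBelow
      (fun (x : ι × ι) m => r x.1 m ∧ r x.2 m)).symm
  rw [Nat.mul_sub_one, ← offDiag_card]
  congr 1
  ext x
  simp only [bipartiteBelow, mem_filter, mem_offDiag, mem_univ, true_and]
  tauto

theorem card_filter_eq_one_or_eq_card {ι β : Type*} [Fintype ι] [DecidableEq ι]
    {s : Finset β} (tan : ι → β → Prop) [∀ j m, Decidable (tan j m)] (μ : ℕ)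
    (hpos : ∀ m ∈ s, ∃ j, tan j m)
    (hμ : ∀ j k, j ≠ k → μ ≤ #{m ∈ s | tan j m ∧ tan k m})
    (hsum : ∑ m ∈ s, #{j | tan j m} = #s + (Fintype.card ι - 1) * μ) :
    ∀ m ∈ s, #{j | tan j m} = 1 ∨ #{j | tan j m} = Fintype.card ι := by
  set c := Fintype.card ι
  set a : β → ℕ := fun m => #{j | tan j m}
  have ha_pos : ∀ m ∈ s, 1 ≤ a m := fun m hm => by
    obtain ⟨j, hj⟩ := hpos m hm
    exact card_pos.mpr ⟨j, mem_filter.mpr ⟨mem_univ j, hj⟩⟩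
  have ha_le : ∀ m, a m ≤ c := fun m => card_filter_le _ _
  have hpairs : c * (c - 1) * μ ≤ ∑ m ∈ s, a m * (a m - 1) :=
    calc c * (c - 1) * μ = ∑ _x ∈ (univ : Finset ι).offDiag, μ := by
          rw [sum_const, offDiag_card, card_univ, Nat.mul_sub_one, smul_eq_mul]
      _ ≤ ∑ x ∈ (univ : Finset ι).offDiag, #{m ∈ s | tan x.1 m ∧ tan x.2 m} :=
          sum_le_sum fun x hx => hμ x.1 x.2 (mem_offDiag.mp hx).2.2
      _ = ∑ m ∈ s, a m * (a m - 1) := (sum_card_filter_mul_pred_eq_sum_offDiag s tan).symm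
  -- the terms `(a - 1) (c - a)` are nonnegative, and the bound on pairs forces their sum to vanish
  have hsplit : ∀ m ∈ s, (a m - 1) * (c - a m) + a m * (a m - 1) = c * (a m - 1) := by
    intro m hm
    have h1 := ha_pos m hm
    have h2 := ha_le m
    zify [h1, h2]
    ring
  have hsum' : ∑ m ∈ s, (a m - 1) + #s = ∑ m ∈ s, a m := by
    rw [card_eq_sum_ones, ← sum_add_distrib]
    exact sum_congr rfl fun m hm => Nat.sub_add_cancel (ha_pos m hm)
  have hzero : ∑ m ∈ s, (a m - 1) * (c - a m) = 0 := by
    have htot := sum_congr rfl hsplit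
    rw [sum_add_distrib, ← mul_sum] at htot
    rw [hsum] at hsum'
    have hdec : ∑ m ∈ s, (a m - 1) = (c - 1) * μ := by omega
    rw [hdec, ← mul_assoc] at htot
    omega
  intro m hm
  change a m = 1 ∨ a m = c
  have h1 := ha_pos m hm
  have h2 := ha_le m
  rcases Nat.mul_eq_zero.mp ((sum_eq_zero_iff.mp hzero) m hm) with h | h <;> omega

section Projective

variable {F}

theorem ncard_ptsOn_s13 (W : Submodule F (V4 F)) :
    (ptsOn F W).ncard = ∑ i ∈ range (finrank F W), Fintype.card F ^ i := by
  have hpts : ptsOn F W = Submodule.map W.subtype '' {H | finrank F H = 1} := by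
    ext p
    refine ⟨fun ⟨hp, hpW⟩ => ⟨p.comap W.subtype, ?_, ?_⟩, ?_⟩
    · change finrank F _ = 1
      rw [← Submodule.finrank_map_subtype_eq, Submodule.map_comap_subtype,
        inf_eq_right.mpr hpW, hp]
    · rw [Submodule.map_comap_subtype, inf_eq_right.mpr hpW]
    · rintro ⟨H, hH, rfl⟩
      exact ⟨(Submodule.finrank_map_subtype_eq W H).trans hH, Submodule.map_subtype_le W H⟩
  rw [hpts, Set.ncard_image_of_injective _ (Submodule.map_injective_of_injective
    W.injective_subtype), ← Nat.card_coe_set_eq, Set.coe_ofPred,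
    ← Nat.card_congr (Projectivization.equivSubmodule F W),
    Projectivization.card_of_finrank F W rfl, Nat.card_eq_fintype_card]

theorem ncard_ptsOn_of_isLn {L : Submodule F (V4 F)} (hL : IsLn F L) :
    (ptsOn F L).ncard = Fintype.card F + 1 := by
  rw [ncard_ptsOn_s13, show finrank F L = 2 from hL]
  simp [sum_range_succ, add_comm]

theorem ncard_ptsOn_top :
    (ptsOn F ⊤).ncard = (Fintype.card F + 1) * (Fintype.card F ^ 2 + 1) := by
  rw [ncard_ptsOn_s13, finrank_top, Module.finrank_fin_fun]
  simp [sum_range_succ]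
  ring

variable (F) in
def lines : Finset (Submodule F (V4 F)) := {L | IsLn F L}

theorem sum_card_filter_pairs_le_eq_card (X : Finset (Submodule F (V4 F) × Submodule F (V4 F)))
    (hX : ∀ x ∈ X, IsPt F x.1 ∧ IsPt F x.2 ∧ x.1 ≠ x.2) :
    ∑ m ∈ lines F, #{x ∈ X | x.1 ≤ m ∧ x.2 ≤ m} = #X := by
  calc ∑ m ∈ lines F, #{x ∈ X | x.1 ≤ m ∧ x.2 ≤ m}
      = ∑ x ∈ X, #{m ∈ lines F | x.1 ≤ m ∧ x.2 ≤ m} :=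
        (sum_card_bipartiteAbove_eq_sum_card_bipartiteBelow _).symm
    _ = ∑ _x ∈ X, 1 := sum_congr rfl fun x hx => card_eq_one.mpr ?_
    _ = #X := (card_eq_sum_ones X).symm
  obtain ⟨hp, hr, hpr⟩ := hX x hx
  obtain ⟨L, hL, huniq⟩ := Submodule.existsUnique_finrank_eq_two_le hp hr hpr
  refine ⟨L, eq_singleton_iff_unique_mem.mpr ⟨?_, fun m hm => ?_⟩⟩
  · simp only [lines, mem_filter, mem_univ, true_and]
    exact hL
  · simp only [lines, mem_filter, mem_univ, true_and] at hm
    exact huniq m hm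

theorem toFinset_inter_ptsOn {A : Set (Submodule F (V4 F))} (hA : ∀ p ∈ A, IsPt F p)
    (m : Submodule F (V4 F)) : (A ∩ ptsOn F m).toFinset = {p ∈ A.toFinset | p ≤ m} := by
  ext p
  rw [Set.mem_toFinset, mem_filter, Set.mem_toFinset]
  exact ⟨fun ⟨hpA, hp⟩ => ⟨hpA, hp.2⟩, fun ⟨hpA, hpm⟩ => ⟨hpA, hA p hpA, hpm⟩⟩

theorem sum_ncard_inter_ptsOn_mul_pred {A : Set (Submodule F (V4 F))} (hA : ∀ p ∈ A, IsPt F p) :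
    ∑ m ∈ lines F, (A ∩ ptsOn F m).ncard * ((A ∩ ptsOn F m).ncard - 1) =
      A.ncard * (A.ncard - 1) := by
  have hpairs := sum_card_filter_pairs_le_eq_card A.toFinset.offDiag fun x hx => by
    simp only [mem_offDiag, Set.mem_toFinset] at hx
    exact ⟨hA _ hx.1, hA _ hx.2.1, hx.2.2⟩
  rw [offDiag_card, ← Nat.mul_sub_one, ← Set.ncard_eq_toFinset_card'] at hpairs
  rw [← hpairs]
  refine sum_congr rfl fun m _ => ?_
  rw [Set.ncard_eq_toFinset_card', toFinset_inter_ptsOn hA, Nat.mul_sub_one, ← offDiag_card]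
  congr 1
  ext x
  simp only [mem_offDiag, mem_filter]
  tauto

theorem sum_ncard_inter_ptsOn_mul {A B : Set (Submodule F (V4 F))} (hA : ∀ p ∈ A, IsPt F p)
    (hB : ∀ p ∈ B, IsPt F p) (hAB : Disjoint A B) :
    ∑ m ∈ lines F, (A ∩ ptsOn F m).ncard * (B ∩ ptsOn F m).ncard = A.ncard * B.ncard := by
  have hpairs := sum_card_filter_pairs_le_eq_card (A.toFinset ×ˢ B.toFinset) fun x hx => by
    simp only [mem_product, Set.mem_toFinset] at hx
    exact ⟨hA _ hx.1, hB _ hx.2, fun h => hAB.ne_of_mem hx.1 hx.2 h⟩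
  rw [card_product, ← Set.ncard_eq_toFinset_card', ← Set.ncard_eq_toFinset_card'] at hpairs
  rw [← hpairs]
  refine sum_congr rfl fun m _ => ?_
  rw [Set.ncard_eq_toFinset_card', Set.ncard_eq_toFinset_card', toFinset_inter_ptsOn hA,
    toFinset_inter_ptsOn hB, ← card_product, ← filter_product]

theorem card_lines :
    #(lines F) = (Fintype.card F ^ 2 + 1) * (Fintype.card F ^ 2 + Fintype.card F + 1) := by
  have hpts : ∀ p ∈ ptsOn F ⊤, IsPt F p := fun p hp => hp.1
  have hcount := sum_ncard_inter_ptsOn_mul_pred hpts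
  have hline : ∀ m ∈ lines F, (ptsOn F ⊤ ∩ ptsOn F m).ncard = Fintype.card F + 1 := by
    intro m hm
    have hsub : ptsOn F m ⊆ ptsOn F ⊤ := fun p hp => ⟨hp.1, le_top⟩
    rw [Set.inter_eq_right.mpr hsub]
    exact ncard_ptsOn_of_isLn (mem_filter.mp hm).2
  rw [sum_congr rfl fun m hm => by rw [hline m hm], sum_const, smul_eq_mul,
    ncard_ptsOn_top] at hcount
  set q := Fintype.card F
  have hP : (q + 1) * (q ^ 2 + 1) = q * (q ^ 2 + q + 1) + 1 := by ring
  rw [Nat.add_sub_cancel, hP, Nat.add_sub_cancel, ← hP] at hcount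
  refine Nat.eq_of_mul_eq_mul_right (by positivity : 0 < (q + 1) * q) ?_
  rw [hcount]
  ring

theorem IsOvoid.ncard_inter_ptsOn_le_two {q : ℕ} {O : Set (Submodule F (V4 F))}
    (hO : IsOvoid F q O) {L : Submodule F (V4 F)} (hL : IsLn F L) :
    (O ∩ ptsOn F L).ncard ≤ 2 := by
  by_contra! h
  obtain ⟨a, b, c, ha, hb, hc, hab, hac, hbc⟩ := (Set.two_lt_ncard_iff).mp h
  exact hO.2.2 a ha.1 b hb.1 c hc.1 hab hac hbc ⟨L, hL, ha.2.2, hb.2.2, hc.2.2⟩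

instance : Finite (V4 F ≃ₗ[F] V4 F) :=
  Finite.of_injective (fun e : V4 F ≃ₗ[F] V4 F => (e : V4 F → V4 F)) DFunLike.coe_injective

theorem ptsOn_smul (e : V4 F ≃ₗ[F] V4 F) (W : Submodule F (V4 F)) :
    ptsOn F (e • W) = e • ptsOn F W := by
  ext p
  rw [Set.mem_smul_set_iff_inv_smul_mem]
  change finrank F p = 1 ∧ p ≤ e • W ↔ finrank F ↥(e⁻¹ • p) = 1 ∧ e⁻¹ • p ≤ W
  rw [Submodule.finrank_smul, Submodule.le_smul_iff_inv_smul_le]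

theorem ncard_inter_ptsOn_smul {E : Set (Submodule F (V4 F))} {e : V4 F ≃ₗ[F] V4 F}
    (hE : e • E = E) (W : Submodule F (V4 F)) :
    (E ∩ ptsOn F (e • W)).ncard = (E ∩ ptsOn F W).ncard := by
  conv_lhs => rw [ptsOn_smul, ← hE, ← Set.smul_set_inter, Set.ncard_smul_set]

theorem smul_eq_self_of_inter_ptsOn_eq_singleton {E : Set (Submodule F (V4 F))}
    {e : V4 F ≃ₗ[F] V4 F} (hE : e • E = E) {m p : Submodule F (V4 F)} (hm : e • m = m)
    (hp : E ∩ ptsOn F m = {p}) : e • p = p := by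
  have h := congrArg (e • ·) hp
  rw [Set.smul_set_inter, ← ptsOn_smul, hE, hm, hp, Set.smul_set_singleton] at h
  exact (Set.singleton_eq_singleton_iff.mp h).symm

end Projective

theorem smul_set_eq_of_forall_smul_mem {G α : Type*} [Group G] [MulAction G α] {O : Set α}
    (h : ∀ g : G, ∀ a ∈ O, g • a ∈ O) (g : G) : g • O = O :=
  Set.Subset.antisymm (Set.smul_set_subset_iff.mpr (h g))
    (Set.subset_smul_set_iff.mpr (Set.smul_set_subset_iff.mpr (h g⁻¹)))

section Fibration

variable {F} {q : ℕ} {ι : Type*} {E : ι → Set (Submodule F (V4 F))}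

theorem sum_ncard_inter_ptsOn_eq_ncard_ptsOn [Fintype ι] (hcover : ∀ p, IsPt F p → ∃ i, p ∈ E i)
    (hEdisj : ∀ i j, i ≠ j → Disjoint (E i) (E j)) (L : Submodule F (V4 F)) :
    ∑ i, (E i ∩ ptsOn F L).ncard = (ptsOn F L).ncard := by
  have hU : ptsOn F L = ⋃ i, E i ∩ ptsOn F L := by
    ext p
    simp only [Set.mem_iUnion, Set.mem_inter_iff]
    exact ⟨fun hp => (hcover p hp.1).imp fun i hi => ⟨hi, hp⟩, fun ⟨_, _, hp⟩ => hp⟩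
  rw [congrArg Set.ncard hU, Set.ncard_iUnion_of_finite (fun _ => Set.toFinite _)
    fun i j hij => (hEdisj i j hij).mono Set.inter_subset_left Set.inter_subset_left,
    finsum_eq_sum_of_fintype]

theorem exists_ncard_inter_ptsOn_eq_one [Fintype ι] (hov : ∀ i, IsOvoid F q (E i))
    (hcover : ∀ p, IsPt F p → ∃ i, p ∈ E i) (hEdisj : ∀ i j, i ≠ j → Disjoint (E i) (E j))
    (heven : Even (Fintype.card F)) {L : Submodule F (V4 F)} (hL : IsLn F L) :
    ∃ i, (E i ∩ ptsOn F L).ncard = 1 := by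
  have hodd : Odd (∑ i, (E i ∩ ptsOn F L).ncard) := by
    rw [sum_ncard_inter_ptsOn_eq_ncard_ptsOn hcover hEdisj, ncard_ptsOn_of_isLn hL]
    exact heven.add_one
  obtain ⟨i, -, k, hk⟩ := exists_odd_of_odd_sum hodd
  have := (hov i).ncard_inter_ptsOn_le_two hL
  exact ⟨i, by omega⟩

theorem exists_common_tangent (hov : ∀ i, IsOvoid F q (E i))
    (hEdisj : ∀ i j, i ≠ j → Disjoint (E i) (E j)) (heven : Even q) {j k : ι} (hjk : j ≠ k) :
    ∃ m ∈ lines F, (E j ∩ ptsOn F m).ncard = 1 ∧ (E k ∩ ptsOn F m).ncard = 1 := by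
  have hodd : Odd (∑ m ∈ lines F, (E j ∩ ptsOn F m).ncard * (E k ∩ ptsOn F m).ncard) := by
    rw [sum_ncard_inter_ptsOn_mul (hov j).1 (hov k).1 (hEdisj j k hjk), (hov j).2.1,
      (hov k).2.1]
    have : Odd (q ^ 2 + 1) := (heven.pow_of_ne_zero two_ne_zero).add_one
    exact this.mul this
  obtain ⟨m, hm, hodd⟩ := exists_odd_of_odd_sum hodd
  obtain ⟨⟨a, ha⟩, ⟨b, hb⟩⟩ := Nat.odd_mul.mp hodd
  have hL : IsLn F m := (mem_filter.mp hm).2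
  have := (hov j).ncard_inter_ptsOn_le_two hL
  have := (hov k).ncard_inter_ptsOn_le_two hL
  exact ⟨m, hm, by omega, by omega⟩

theorem sum_card_tangent (hq : Fintype.card F = q) {E : Fin (q + 1) → Set (Submodule F (V4 F))}
    (hov : ∀ i, IsOvoid F q (E i)) (hcover : ∀ p, IsPt F p → ∃ i, p ∈ E i)
    (hEdisj : ∀ i j, i ≠ j → Disjoint (E i) (E j)) :
    ∑ m ∈ lines F, #{j | (E j ∩ ptsOn F m).ncard = 1} = #(lines F) + q * (q ^ 2 + 1) := by
  have hline : ∀ m ∈ lines F, #{j | (E j ∩ ptsOn F m).ncard = 1} +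
      ∑ j, (E j ∩ ptsOn F m).ncard * ((E j ∩ ptsOn F m).ncard - 1) = q + 1 := by
    intro m hm
    have hL : IsLn F m := (mem_filter.mp hm).2
    have hpart := sum_ncard_inter_ptsOn_eq_ncard_ptsOn hcover hEdisj m
    rw [ncard_ptsOn_of_isLn hL, hq] at hpart
    rw [card_filter, ← sum_add_distrib]
    refine (sum_congr rfl fun j _ => ?_).trans hpart
    have := (hov j).ncard_inter_ptsOn_le_two hL
    interval_cases (E j ∩ ptsOn F m).ncard <;> rfl
  have hsec : ∀ j, ∑ m ∈ lines F, (E j ∩ ptsOn F m).ncard * ((E j ∩ ptsOn F m).ncard - 1) =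
      (q ^ 2 + 1) * (q ^ 2 + 1 - 1) := fun j => by
    rw [sum_ncard_inter_ptsOn_mul_pred (hov j).1, (hov j).2.1]
  have htot := sum_congr rfl hline
  rw [sum_add_distrib, sum_comm, sum_congr rfl fun j _ => hsec j, sum_const, sum_const,
    card_univ, Fintype.card_fin, smul_eq_mul, smul_eq_mul, Nat.add_sub_cancel] at htot
  have hN : #(lines F) * (q + 1) =
      #(lines F) + q * (q ^ 2 + 1) + (q + 1) * ((q ^ 2 + 1) * q ^ 2) := by
    rw [card_lines, hq]
    ring
  omega

theorem smul_left_injective_of_ncard_inter_ptsOn_eq_one {T : Subgroup (V4 F ≃ₗ[F] V4 F)}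
    {O : Set (Submodule F (V4 F))} (hinv : ∀ t : T, ∀ p ∈ O, t • p ∈ O)
    (htrans : ∀ p ∈ O, ∀ r ∈ O, ∃ t : T, t • p = r) (hcard : Nat.card T = O.ncard)
    {m : Submodule F (V4 F)} (hm : (O ∩ ptsOn F m).ncard = 1) :
    Function.Injective fun t : T => t • m := by
  obtain ⟨p, hp⟩ := Set.ncard_eq_one.mp hm
  have hpO : p ∈ O := (Set.singleton_subset_iff.mp hp.symm.subset).1
  have horbit := smul_left_injective_of_card_eq_ncard (fun t : T => hinv t p hpO) (htrans p hpO)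
    hcard
  intro s t hst
  have hfix : (s⁻¹ * t) • m = m := by
    simp only at hst
    rw [mul_smul, ← hst, inv_smul_smul]
  have hpfix : (s⁻¹ * t) • p = p :=
    smul_eq_self_of_inter_ptsOn_eq_singleton (e := ((s⁻¹ * t : T) : V4 F ≃ₗ[F] V4 F))
      (smul_set_eq_of_forall_smul_mem hinv _) hfix hp
  exact inv_mul_eq_one.mp (horbit (hpfix.trans (one_smul T p).symm))

theorem le_card_common_tangents {T : Subgroup (V4 F ≃ₗ[F] V4 F)} (hTcard : Nat.card T = q ^ 2 + 1)
    (hov : ∀ i, IsOvoid F q (E i)) (hinv : ∀ i, ∀ t : T, ∀ p ∈ E i, t • p ∈ E i)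
    (htrans : ∀ i, ∀ p ∈ E i, ∀ r ∈ E i, ∃ t : T, t • p = r)
    (hEdisj : ∀ i j, i ≠ j → Disjoint (E i) (E j)) (heven : Even q) {j k : ι} (hjk : j ≠ k) :
    q ^ 2 + 1 ≤ #{m ∈ lines F | (E j ∩ ptsOn F m).ncard = 1 ∧ (E k ∩ ptsOn F m).ncard = 1} := by
  obtain ⟨m, hm, hjm, hkm⟩ := exists_common_tangent hov hEdisj heven hjk
  have hinj := smul_left_injective_of_ncard_inter_ptsOn_eq_one (hinv j) (htrans j)
    (hTcard.trans (hov j).2.1.symm) hjm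
  have hL : IsLn F m := (mem_filter.mp hm).2
  have hmaps : ∀ t ∈ (Set.univ : Set T), t • m ∈
      (({m ∈ lines F | (E j ∩ ptsOn F m).ncard = 1 ∧ (E k ∩ ptsOn F m).ncard = 1} :
        Finset _) : Set _) := by
    intro t _
    have hinter : ∀ i, (E i ∩ ptsOn F (t • m)).ncard = (E i ∩ ptsOn F m).ncard := fun i =>
      ncard_inter_ptsOn_smul (e := (t : V4 F ≃ₗ[F] V4 F))
        (smul_set_eq_of_forall_smul_mem (hinv i) t) m
    rw [mem_coe, mem_filter, hinter, hinter]
    exact ⟨mem_filter.mpr ⟨mem_univ _, (Submodule.finrank_smul _ m).trans hL⟩, hjm, hkm⟩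
  calc q ^ 2 + 1 = (Set.univ : Set T).ncard := by rw [Set.ncard_univ, hTcard]
    _ ≤ _ := Set.ncard_le_ncard_of_injOn _ hmaps hinj.injOn
    _ = _ := Set.ncard_coe_finset _

theorem card_tangent_eq_one_or_eq (hq : Fintype.card F = q) {T : Subgroup (V4 F ≃ₗ[F] V4 F)}
    (hTcard : Nat.card T = q ^ 2 + 1) {E : Fin (q + 1) → Set (Submodule F (V4 F))}
    (hov : ∀ i, IsOvoid F q (E i)) (hinv : ∀ i, ∀ t : T, ∀ p ∈ E i, t • p ∈ E i)
    (htrans : ∀ i, ∀ p ∈ E i, ∀ r ∈ E i, ∃ t : T, t • p = r)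
    (hcover : ∀ p, IsPt F p → ∃ i, p ∈ E i) (hEdisj : ∀ i j, i ≠ j → Disjoint (E i) (E j))
    (heven : Even q) {L : Submodule F (V4 F)} (hL : IsLn F L) :
    #{j | (E j ∩ ptsOn F L).ncard = 1} = 1 ∨ #{j | (E j ∩ ptsOn F L).ncard = 1} = q + 1 := by
  have := card_filter_eq_one_or_eq_card (s := lines F)
    (fun j m => (E j ∩ ptsOn F m).ncard = 1) (q ^ 2 + 1)
    (fun m hm => exists_ncard_inter_ptsOn_eq_one hov hcover hEdisj (hq ▸ heven)
      (mem_filter.mp hm).2)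
    (fun j k hjk => le_card_common_tangents hTcard hov hinv htrans hEdisj heven hjk)
    (by rw [sum_card_tangent hq hov hcover hEdisj, Fintype.card_fin, Nat.add_sub_cancel])
    L (mem_filter.mpr ⟨mem_univ _, hL⟩)
  rwa [Fintype.card_fin] at this

theorem finsum_chi_ptsOn_smul_apply {T : Subgroup (V4 F ≃ₗ[F] V4 F)}
    {O : Set (Submodule F (V4 F))} (hinv : ∀ t : T, ∀ p ∈ O, t • p ∈ O)
    (htrans : ∀ p ∈ O, ∀ r ∈ O, ∃ t : T, t • p = r) (hcard : Nat.card T = O.ncard)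
    (ℓ : Submodule F (V4 F)) {p : Pt F} (hp : p.1 ∈ O) :
    (∑ᶠ t : T, chi F (ptsOn F (t • ℓ))) p = ((O ∩ ptsOn F ℓ).ncard : ZMod 2) := by
  have hinj : Function.Injective fun t : T => t⁻¹ • p.1 :=
    (smul_left_injective_of_card_eq_ncard (fun t : T => hinv t p.1 hp) (htrans p.1 hp)
      hcard).comp inv_injective
  have hset : {t : T | p.1 ∈ ptsOn F (t • ℓ)} =
      (fun t : T => t⁻¹ • p.1) ⁻¹' (O ∩ ptsOn F ℓ) := by
    ext t
    rw [Set.mem_ofPred_eq, Set.mem_preimage, Set.mem_inter_iff, MulAction.subgroup_smul_def,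
      ptsOn_smul, Set.mem_smul_set_iff_inv_smul_mem]
    exact ⟨fun h => ⟨hinv _ _ hp, h⟩, And.right⟩
  have hrange : O ∩ ptsOn F ℓ ⊆ Set.range fun t : T => t⁻¹ • p.1 := fun r hr => by
    obtain ⟨t, ht⟩ := htrans p.1 hp r hr.1
    exact ⟨t⁻¹, by simpa using ht⟩
  have := Fintype.ofFinite T
  have hcount : #{t : T | p.1 ∈ ptsOn F (t • ℓ)} = (O ∩ ptsOn F ℓ).ncard := by
    rw [← Set.ncard_preimage_of_injective_subset_range hinj hrange,
      ← hset, Set.ncard_eq_toFinset_card', Set.toFinset_ofPred]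
  rw [finsum_eq_sum_of_fintype, Finset.sum_apply, ← hcount, ← sum_boole]
  rfl

end Fibration

theorem stmt13 (q : ℕ) (hq : Fintype.card F = q) (n : ℕ) (hqn : q = 2 ^ n)
    (T : Subgroup ((V4 F) ≃ₗ[F] (V4 F)))
    (hTcard : Nat.card T = q ^ 2 + 1)
    (E : Fin (q + 1) → Set (Submodule F (V4 F)))
    (hov : ∀ i, IsOvoid F q (E i))
    (hinv : ∀ i, ∀ t ∈ T, ∀ p ∈ E i,
      Submodule.map (t : (V4 F) ≃ₗ[F] (V4 F)).toLinearMap p ∈ E i)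
    (htrans : ∀ i, ∀ p ∈ E i, ∀ r ∈ E i, ∃ t ∈ T,
      Submodule.map (t : (V4 F) ≃ₗ[F] (V4 F)).toLinearMap p = r)
    (hcover : ∀ p, IsPt F p → ∃ i, p ∈ E i)
    (hEdisj : ∀ i j, i ≠ j → Disjoint (E i) (E j))
    (ℓ : Submodule F (V4 F)) (hl : IsLn F ℓ)
    (hlS : ℓ ∉ commonTangents F q E)
    (i : Fin (q + 1)) (hi : (E i ∩ ptsOn F ℓ).ncard = 1) :
    ∑ᶠ t : T,
        chi F (ptsOn F (Submodule.map ((t : (V4 F) ≃ₗ[F] (V4 F)) : (V4 F) ≃ₗ[F] (V4 F)).toLinearMap ℓ)) =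
      chi F (E i) := by
  have heven : Even q := by
    have hn : n ≠ 0 := by
      rintro rfl
      exact (Fintype.one_lt_card (α := F)).ne' (hq.trans hqn)
    exact hqn ▸ (Nat.even_pow' hn).mpr even_two
  have hinv' : ∀ j, ∀ t : T, ∀ p ∈ E j, t • p ∈ E j := fun j t => hinv j t t.2
  have htrans' : ∀ j, ∀ p ∈ E j, ∀ r ∈ E j, ∃ t : T, t • p = r := fun j p hp r hr =>
    let ⟨t, ht, htpr⟩ := htrans j p hp r hr
    ⟨⟨t, ht⟩, htpr⟩
  have hunique : #{j | (E j ∩ ptsOn F ℓ).ncard = 1} = 1 :=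
    (card_tangent_eq_one_or_eq hq hTcard hov hinv' htrans' hcover hEdisj heven hl).resolve_right
      fun hall => hlS ⟨hl, fun j => card_filter_eq_iff.mp
        (hall.trans (card_fin _).symm) j (mem_univ j)⟩
  funext p
  obtain ⟨c, hc⟩ := hcover p.1 p.2
  change (∑ᶠ t : T, chi F (ptsOn F (t • ℓ))) p = _
  rw [finsum_chi_ptsOn_smul_apply (hinv' c) (htrans' c) (hTcard.trans (hov c).2.1.symm) ℓ hc]
  by_cases hci : c = i
  · subst hci
    simp [chi, hi, hc]
  · have hne : (E c ∩ ptsOn F ℓ).ncard ≠ 1 := fun hcℓ =>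
      hci (card_le_one.mp hunique.le c (by simpa using hcℓ) i (by simpa using hi))
    have hle := (hov c).ncard_inter_ptsOn_le_two hl
    rw [chi, if_neg (Set.disjoint_left.mp (hEdisj c i hci) hc)]
    interval_cases (E c ∩ ptsOn F ℓ).ncard
    · rfl
    · exact absurd rfl hne
    · rfl
end
end
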